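/- Non-commutativity identity between the rotational derivative and the SE(2) action: if w : ℝ² → ℝ^N is continuously differentiable, θ ∈ ℝ and b ∈ ℝ², then for every y ∈ ℝ², writing z = R_{−θ}(y − b), one has ∂_ψ(T_γ w)(y) = (∂_ψ w)(z) + Dw(z)(R_{π/2 − θ} b), where Dw(z) is the (total) derivative of w at z applied to the vector R_{π/2 − θ} b ∈ ℝ². -/

import Mathlib

open Real

/-- The rotation `R_θ` of the plane by angle `θ`. -/
noncomputable def rot2 (θ : ℝ) (y : EuclideanSpace ℝ (Fin 2)) : EuclideanSpace ℝ (Fin 2) :=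
  (WithLp.equiv 2 (Fin 2 → ℝ)).symm
    ![Real.cos θ * y 0 - Real.sin θ * y 1, Real.sin θ * y 0 + Real.cos θ * y 1]

/-- The partial derivative `∂ᵢ u` in the `i`-th coordinate direction. -/
noncomputable def pd {N : ℕ} (i : Fin 2)
    (u : EuclideanSpace ℝ (Fin 2) → EuclideanSpace ℝ (Fin N))
    (y : EuclideanSpace ℝ (Fin 2)) : EuclideanSpace ℝ (Fin N) :=
  fderiv ℝ u y (EuclideanSpace.single i 1)

/-- The rotational derivative `(∂_ψ u)(y) = y₁ ∂₂u(y) − y₂ ∂₁u(y)`. -/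
noncomputable def rotDeriv {N : ℕ}
    (u : EuclideanSpace ℝ (Fin 2) → EuclideanSpace ℝ (Fin N))
    (y : EuclideanSpace ℝ (Fin 2)) : EuclideanSpace ℝ (Fin N) :=
  y 0 • pd 1 u y - y 1 • pd 0 u y

/-! The rotational derivative is a directional derivative along the rotation field:
`∂_ψ u(y) = Du(y)(R_{π/2} y)`. The chain rule for the affine isomorphism `x ↦ R_{−θ}(x − b)`
gives `D(T_γ w)(y) = Dw(z) ∘ R_{−θ}`, and since rotations commute,
`R_{−θ} R_{π/2} y = R_{π/2} R_{−θ}(y − b) + R_{π/2 − θ} b = R_{π/2} z + R_{π/2 − θ} b`. -/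

@[simp]
lemma rot2_apply_zero (θ : ℝ) (y : EuclideanSpace ℝ (Fin 2)) :
    rot2 θ y 0 = cos θ * y 0 - sin θ * y 1 := rfl

@[simp]
lemma rot2_apply_one (θ : ℝ) (y : EuclideanSpace ℝ (Fin 2)) :
    rot2 θ y 1 = sin θ * y 0 + cos θ * y 1 := rfl

lemma rot2_add (θ : ℝ) (x y : EuclideanSpace ℝ (Fin 2)) :
    rot2 θ (x + y) = rot2 θ x + rot2 θ y := by
  ext i; fin_cases i <;> simp <;> ring

lemma rot2_smul (θ c : ℝ) (y : EuclideanSpace ℝ (Fin 2)) :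
    rot2 θ (c • y) = c • rot2 θ y := by
  ext i; fin_cases i <;> simp <;> ring

lemma rot2_zero (y : EuclideanSpace ℝ (Fin 2)) : rot2 0 y = y := by
  ext i; fin_cases i <;> simp

lemma rot2_rot2 (α β : ℝ) (y : EuclideanSpace ℝ (Fin 2)) :
    rot2 α (rot2 β y) = rot2 (α + β) y := by
  ext i; fin_cases i <;> simp [cos_add, sin_add] <;> ring

noncomputable def rotLinearEquiv (θ : ℝ) : EuclideanSpace ℝ (Fin 2) ≃ₗ[ℝ] EuclideanSpace ℝ (Fin 2) where
  toFun := rot2 θ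
  invFun := rot2 (-θ)
  map_add' := rot2_add θ
  map_smul' := rot2_smul θ
  left_inv y := by rw [rot2_rot2, neg_add_cancel, rot2_zero]
  right_inv y := by rw [rot2_rot2, add_neg_cancel, rot2_zero]

noncomputable def rotCLE (θ : ℝ) : EuclideanSpace ℝ (Fin 2) ≃L[ℝ] EuclideanSpace ℝ (Fin 2) :=
  (rotLinearEquiv θ).toContinuousLinearEquiv

lemma rot2_pi_div_two (y : EuclideanSpace ℝ (Fin 2)) :
    rot2 (π / 2) y = y 0 • EuclideanSpace.single 1 1 - y 1 • EuclideanSpace.single 0 1 := by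
  ext i; fin_cases i <;> simp

lemma rotDeriv_eq_fderiv_rot2_pi_div_two {N : ℕ}
    (u : EuclideanSpace ℝ (Fin 2) → EuclideanSpace ℝ (Fin N)) (y : EuclideanSpace ℝ (Fin 2)) :
    rotDeriv u y = fderiv ℝ u y (rot2 (π / 2) y) := by
  rw [rot2_pi_div_two, map_sub, map_smul, map_smul, rotDeriv, pd, pd]

lemma fderiv_comp_rot2_sub {F : Type*} [NormedAddCommGroup F] [NormedSpace ℝ F]
    (u : EuclideanSpace ℝ (Fin 2) → F) (θ : ℝ) (b y : EuclideanSpace ℝ (Fin 2)) :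
    fderiv ℝ (fun x => u (rot2 θ (x - b))) y =
      (fderiv ℝ u (rot2 θ (y - b))).comp (rotCLE θ : _ →L[ℝ] _) :=
  (fderiv_comp_sub (f := u ∘ rotCLE θ) b).trans (rotCLE θ).comp_right_fderiv

theorem rotational_derivative_se2_noncommutativity_general (N : ℕ)
    (w : EuclideanSpace ℝ (Fin 2) → EuclideanSpace ℝ (Fin N))
    (θ : ℝ) (b : EuclideanSpace ℝ (Fin 2))
    (y : EuclideanSpace ℝ (Fin 2)) :
    rotDeriv (fun x => w (rot2 (-θ) (x - b))) y =
      rotDeriv w (rot2 (-θ) (y - b)) +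
        fderiv ℝ w (rot2 (-θ) (y - b)) (rot2 (Real.pi / 2 - θ) b) := by
  set z := rot2 (-θ) (y - b)
  have hrot : rot2 (-θ) (rot2 (π / 2) y) = rot2 (π / 2) z + rot2 (π / 2 - θ) b := by
    rw [rot2_rot2, rot2_rot2, neg_add_eq_sub, ← sub_eq_add_neg, ← rot2_add, sub_add_cancel]
  calc rotDeriv (fun x => w (rot2 (-θ) (x - b))) y
      = fderiv ℝ w z (rot2 (-θ) (rot2 (π / 2) y)) := by
        rw [rotDeriv_eq_fderiv_rot2_pi_div_two, fderiv_comp_rot2_sub]; rfl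
    _ = rotDeriv w z + fderiv ℝ w z (rot2 (π / 2 - θ) b) := by
        rw [hrot, map_add, rotDeriv_eq_fderiv_rot2_pi_div_two]

/-- Non-commutativity identity between the rotational derivative and the
`SE(2)` action: for `w ∈ C¹` and `z = R_{−θ}(y − b)`,
`∂_ψ(T_γ w)(y) = (∂_ψ w)(z) + Dw(z)(R_{π/2 − θ} b)`. -/
theorem rotational_derivative_se2_noncommutativity (N : ℕ)
    (w : EuclideanSpace ℝ (Fin 2) → EuclideanSpace ℝ (Fin N))
    (hw : ContDiff ℝ 1 w) (θ : ℝ) (b : EuclideanSpace ℝ (Fin 2))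
    (y : EuclideanSpace ℝ (Fin 2)) :
    rotDeriv (fun x => w (rot2 (-θ) (x - b))) y =
      rotDeriv w (rot2 (-θ) (y - b)) +
        fderiv ℝ w (rot2 (-θ) (y - b)) (rot2 (Real.pi / 2 - θ) b) :=
  rotational_derivative_se2_noncommutativity_general N w θ b y
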